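/- Let m ≥ n, let 1 ≤ ϱ < s < l, and let A ∈ ℝ^{m×n} admit an SVD partition at level ϱ with Σ₁ invertible. Let Ω ∈ ℝ^{n×s} and Φ ∈ ℝ^{n×l} be independent standard Gaussian matrices. Then the matrix F₁ = I + Σ₁Φ₁Φ₂ᵀΣ₂²Ω₂Ω₁†Σ₁⁻²(Φ₁Φ₁ᵀ)⁻¹Σ₁⁻¹ ∈ ℝ^{ϱ×ϱ} is invertible with probability 1. -/

import Mathlib

open MeasureTheory ProbabilityTheory Matrix
open scoped ENNReal

noncomputable section

namespace RSVD

instance (m n : ℕ) : MeasurableSpace (Matrix (Fin m) (Fin n) ℝ) :=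
  inferInstanceAs (MeasurableSpace (Fin m → Fin n → ℝ))

/-- The law of an `m × n` random matrix with i.i.d. standard normal entries. -/
def stdGaussian (m n : ℕ) : Measure (Matrix (Fin m) (Fin n) ℝ) :=
  Measure.pi fun _ : Fin m => Measure.pi fun _ : Fin n => gaussianReal 0 1

/-- The Frobenius norm of a real matrix. -/
def frobNorm {m n : ℕ} (M : Matrix (Fin m) (Fin n) ℝ) : ℝ :=
  Real.sqrt (∑ i, ∑ j, M i j ^ 2)

/-- `Mᵀ M` is Hermitian (restores a lemma removed from Mathlib). -/
theorem Matrix.isHermitian_transpose_mul_self {m n : ℕ} (M : Matrix (Fin m) (Fin n) ℝ) :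
    (Mᵀ * M).IsHermitian := by
  rw [IsHermitian, conjTranspose_eq_transpose_of_trivial, transpose_mul, transpose_transpose]

/-- The `i`-th largest singular value of `M` (indexing is 1-based); `0` out of range. -/
def singularValue {m n : ℕ} (M : Matrix (Fin m) (Fin n) ℝ) (i : ℕ) : ℝ :=
  if h : 1 ≤ i ∧ i ≤ n then
    Real.sqrt
      (((Matrix.isHermitian_transpose_mul_self M).eigenvalues ∘
          Tuple.sort (Matrix.isHermitian_transpose_mul_self M).eigenvalues)
        (Fin.rev ⟨i - 1, by omega⟩))
  else 0

/-- The spectral norm (largest singular value). -/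
def specNorm {m n : ℕ} (M : Matrix (Fin m) (Fin n) ℝ) : ℝ :=
  singularValue M 1

/-- The tail energy `τ_k(M) = (∑_{i ≥ k} σ_i(M)²)^{1/2}`. -/
def tailEnergy {m n : ℕ} (M : Matrix (Fin m) (Fin n) ℝ) (k : ℕ) : ℝ :=
  Real.sqrt (∑ i ∈ Finset.Icc k n, singularValue M i ^ 2)

/-- The Schatten-`p` norm, with `p = ∞` giving the spectral norm. -/
def schattenNorm {m n : ℕ} (M : Matrix (Fin m) (Fin n) ℝ) (p : ℝ≥0∞) : ℝ :=
  if p = ∞ then specNorm M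
  else (∑ i ∈ Finset.Icc 1 n, singularValue M i ^ p.toReal) ^ (1 / p.toReal)

/-- Moore–Penrose pseudoinverse of a full-row-rank matrix: `G† = Gᵀ (G Gᵀ)⁻¹`. -/
def pinvRow {a b : ℕ} (G : Matrix (Fin a) (Fin b) ℝ) : Matrix (Fin b) (Fin a) ℝ :=
  Gᵀ * (G * Gᵀ)⁻¹

/-- Moore–Penrose pseudoinverse of a full-column-rank matrix: `G† = (Gᵀ G)⁻¹ Gᵀ`. -/
def pinvCol {a b : ℕ} (G : Matrix (Fin a) (Fin b) ℝ) : Matrix (Fin b) (Fin a) ℝ :=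
  (Gᵀ * G)⁻¹ * Gᵀ

/-- The column space of a matrix, as a subspace of Euclidean space. -/
def colSpace {m k : ℕ} (M : Matrix (Fin m) (Fin k) ℝ) :
    Submodule ℝ (EuclideanSpace ℝ (Fin m)) :=
  LinearMap.range (Matrix.toEuclideanLin M)

/-- The matrix of the orthogonal projection onto the column space of `M`. -/
def projCol {m k : ℕ} (M : Matrix (Fin m) (Fin k) ℝ) : Matrix (Fin m) (Fin m) ℝ :=
  Matrix.toEuclideanLin.symm
    (((colSpace M).subtypeL.comp ((colSpace M).orthogonalProjectionOnto)).toLinearMap)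

/-- An SVD partition of `A ∈ ℝ^{m×n}` at level `ϱ` (`1 ≤ ϱ < n`):
`A = U Σ Vᵀ` with `U, V` having orthonormal columns and `Σ` diagonal with
nonincreasing nonnegative entries. -/
structure SVDPartition (m n ϱ : ℕ) (A : Matrix (Fin m) (Fin n) ℝ) where
  U : Matrix (Fin m) (Fin n) ℝ
  V : Matrix (Fin n) (Fin n) ℝ
  σ : Fin n → ℝ
  hU : Uᵀ * U = 1
  hV : Vᵀ * V = 1
  hmono : ∀ i j : Fin n, i ≤ j → σ j ≤ σ i
  hnonneg : ∀ i, 0 ≤ σ i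
  hA : A = U * Matrix.diagonal σ * Vᵀ
  hϱ0 : 0 < ϱ
  hϱn : ϱ < n

namespace SVDPartition

variable {m n ϱ : ℕ} {A : Matrix (Fin m) (Fin n) ℝ}

/-- `Σ₁ = diag(σ₁, …, σ_ϱ)`. -/
def Sig1 (P : SVDPartition m n ϱ A) : Matrix (Fin ϱ) (Fin ϱ) ℝ :=
  Matrix.diagonal fun i => P.σ (Fin.castLE P.hϱn.le i)

/-- `Σ₂ = diag(σ_{ϱ+1}, …, σ_n)`. -/
def Sig2 (P : SVDPartition m n ϱ A) : Matrix (Fin (n - ϱ)) (Fin (n - ϱ)) ℝ :=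
  Matrix.diagonal fun i : Fin (n - ϱ) => P.σ ⟨ϱ + (i : ℕ), by have h := i.isLt; omega⟩

/-- `V₁`, the first `ϱ` columns of `V`. -/
def V1 (P : SVDPartition m n ϱ A) : Matrix (Fin n) (Fin ϱ) ℝ :=
  Matrix.of fun i j => P.V i (Fin.castLE P.hϱn.le j)

/-- `V₂`, the last `n - ϱ` columns of `V`. -/
def V2 (P : SVDPartition m n ϱ A) : Matrix (Fin n) (Fin (n - ϱ)) ℝ :=
  Matrix.of fun i (j : Fin (n - ϱ)) => P.V i ⟨ϱ + (j : ℕ), by have h := j.isLt; omega⟩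

/-- `σ_ϱ(A)`, the `ϱ`-th singular value (1-based). -/
def sigmaLast (P : SVDPartition m n ϱ A) : ℝ :=
  P.σ ⟨ϱ - 1, by have h0 := P.hϱ0; have h1 := P.hϱn; omega⟩

/-- `σ_{ϱ+1}(A)`, the `(ϱ+1)`-st singular value (1-based). -/
def sigmaNext (P : SVDPartition m n ϱ A) : ℝ :=
  P.σ ⟨ϱ, P.hϱn⟩

/-- `H = Σ₂² Ω₂ Ω₁† Σ₁⁻²`. -/
def Hmat (P : SVDPartition m n ϱ A) {s : ℕ} (Ω : Matrix (Fin n) (Fin s) ℝ) :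
    Matrix (Fin (n - ϱ)) (Fin ϱ) ℝ :=
  P.Sig2 ^ 2 * (P.V2ᵀ * Ω) * pinvRow (P.V1ᵀ * Ω) * P.Sig1⁻¹ ^ 2

/-- `I + Φ₁ Φ₂ᵀ H (Φ₁ Φ₁ᵀ)⁻¹`. -/
def innerMat (P : SVDPartition m n ϱ A) {s l : ℕ}
    (Ω : Matrix (Fin n) (Fin s) ℝ) (Φ : Matrix (Fin n) (Fin l) ℝ) :
    Matrix (Fin ϱ) (Fin ϱ) ℝ :=
  1 + (P.V1ᵀ * Φ) * (P.V2ᵀ * Φ)ᵀ * P.Hmat Ω * ((P.V1ᵀ * Φ) * (P.V1ᵀ * Φ)ᵀ)⁻¹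

end SVDPartition

end RSVD

/-!
The complement of the event is contained in the union of the zero sets of two polynomials in
the entries of `(Ω, Φ)`. The first is `c = det(Ω₁Ω₁ᵀ) det(Φ₁Φ₁ᵀ)`; the second is
`det(c • I + M)`, where `M` is `c • (F₁ - I)` with the inverses of the two Gram matrices replaced
by their adjugates, so that `det(c • I + M) = c ^ ϱ * det F₁` wherever `c ≠ 0`. At the point
`Ω = V₁ [I 0]`, `Φ = V₁ [I 0]` one has `Ω₂ = Φ₂ = 0` and both polynomials equal `1`. The zero set
of a nonzero polynomial is null for a product of atomless measures, by induction on the number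
of variables and Fubini.
-/

namespace MeasureTheory

theorem measurePreserving_curry_symm {ι κ X : Type*} [Fintype ι] [Fintype κ] [MeasurableSpace X]
    (μ : ι → κ → Measure X) [∀ i j, SigmaFinite (μ i j)] :
    MeasurePreserving (MeasurableEquiv.curry ι κ X).symm (Measure.pi fun i => Measure.pi (μ i))
      (Measure.pi fun p => μ p.1 p.2) where
  measurable := MeasurableEquiv.measurable _
  map_eq := by
    refine (Measure.pi_eq fun S _ => ?_).symm
    have hpre : (MeasurableEquiv.curry ι κ X).symm ⁻¹' Set.univ.pi S =
        Set.univ.pi fun i => Set.univ.pi fun j => S (i, j) := by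
      ext f
      simp [MeasurableEquiv.coe_curry_symm]
    rw [MeasurableEquiv.map_apply, hpre, Measure.pi_pi]
    simp_rw [Measure.pi_pi]
    rw [Fintype.prod_prod_type]

theorem Measure.pi_eq_zero_of_ae_cons {X : Type*} [MeasurableSpace X] {k : ℕ}
    (μ : Fin (k + 1) → Measure X) [∀ i, SigmaFinite (μ i)] {S : Set (Fin (k + 1) → X)}
    (hS : MeasurableSet S)
    (h : ∀ᵐ x ∂Measure.pi (fun i => μ i.succ), μ 0 {a | Fin.cons a x ∈ S} = 0) :
    Measure.pi μ S = 0 := by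
  let e := (MeasurableEquiv.piFinSuccAbove (fun _ : Fin (k + 1) => X) 0).symm
  have he (a : X) (x : Fin k → X) : e (a, x) = Fin.cons a x := by
    simp [e, MeasurableEquiv.piFinSuccAbove, Fin.consEquiv]
  have hcons := (measurePreserving_piFinSuccAbove μ 0).symm.measure_preimage_equiv S
  simp only [Fin.succAbove_zero] at hcons
  rw [← hcons, Measure.prod_apply_symm (e.measurable hS)]
  refine (lintegral_congr_ae ?_).trans lintegral_zero
  filter_upwards [h] with x hx
  simpa only [Set.preimage, he, Set.mem_ofPred_eq] using hx

end MeasureTheory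

namespace MvPolynomial

open MeasureTheory

theorem measure_pi_setOf_eval_eq_zero_fin {k : ℕ} (μ : Fin k → Measure ℝ)
    [∀ i, SigmaFinite (μ i)] [∀ i, NullSingletonClass (μ i)] {p : MvPolynomial (Fin k) ℝ}
    (hp : p ≠ 0) : Measure.pi μ {x | eval x p = 0} = 0 := by
  induction k with
  | zero =>
    obtain ⟨c, rfl⟩ := C_surjective (Fin 0) p
    have hc : c ≠ 0 := by rintro rfl; exact hp C_0
    simp [hc]
  | succ k ih =>
    obtain ⟨j, hj⟩ : ∃ j, (finSuccEquiv ℝ k p).coeff j ≠ 0 := by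
      by_contra! h
      exact hp ((finSuccEquiv ℝ k).injective (by ext1 j; simp [h j]))
    have hcoeff : ∀ᵐ x ∂Measure.pi (fun i => μ i.succ),
        eval x ((finSuccEquiv ℝ k p).coeff j) ≠ 0 :=
      ae_iff.2 (by simpa using ih (fun i => μ i.succ) hj)
    refine Measure.pi_eq_zero_of_ae_cons μ
      (isClosed_eq (continuous_eval p) continuous_const).measurableSet ?_
    filter_upwards [hcoeff] with x hx
    have hslice : (finSuccEquiv ℝ k p).map (eval x) ≠ 0 := fun h0 => hx <| by
      simpa using congrArg (Polynomial.coeff · j) h0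
    simpa only [Set.mem_ofPred_eq, eval_eq_eval_mv_eval', Polynomial.IsRoot.def] using
      (Polynomial.finite_setOfPred_isRoot hslice).measure_zero _

theorem measure_pi_setOf_eval_eq_zero {ι : Type*} [Fintype ι] (μ : ι → Measure ℝ)
    [∀ i, SigmaFinite (μ i)] [∀ i, NullSingletonClass (μ i)] {p : MvPolynomial ι ℝ}
    (hp : p ≠ 0) : Measure.pi μ {x | eval x p = 0} = 0 := by
  let e := (Fintype.equivFin ι).symm
  rw [← (measurePreserving_piCongrLeft μ e).measure_preimage_equiv]
  have hp' : rename e.symm p ≠ 0 := by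
    rwa [Ne, ← map_zero (rename e.symm), (rename_injective _ e.symm.injective).eq_iff]
  convert measure_pi_setOf_eval_eq_zero_fin (fun i => μ (e i)) hp' using 2
  ext x
  have hx : MeasurableEquiv.piCongrLeft (fun _ => ℝ) e x = x ∘ e.symm := by
    ext i
    obtain ⟨j, rfl⟩ := e.surjective i
    simp [MeasurableEquiv.coe_piCongrLeft]
  simp [hx, eval_rename]

end MvPolynomial

theorem Matrix.map_map_algebraMap {K R R' m n : Type*} [CommSemiring K] [Semiring R]
    [Semiring R'] [Algebra K R] [Algebra K R'] (f : R →ₐ[K] R') (M : Matrix m n K) :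
    (M.map (algebraMap K R)).map f = M.map (algebraMap K R') := by
  ext; simp

namespace RSVD

instance (m n : ℕ) : IsProbabilityMeasure (stdGaussian m n) :=
  inferInstanceAs <| IsProbabilityMeasure <|
    Measure.pi fun _ : Fin m => Measure.pi fun _ : Fin n => gaussianReal 0 1

abbrev PairIndex (n s l : ℕ) := (Fin n × Fin s) ⊕ (Fin n × Fin l)

def pairFlatten (n s l : ℕ) :
    Matrix (Fin n) (Fin s) ℝ × Matrix (Fin n) (Fin l) ℝ ≃ᵐ (PairIndex n s l → ℝ) :=
  ((MeasurableEquiv.curry _ _ ℝ).symm.prodCongr (MeasurableEquiv.curry _ _ ℝ).symm).trans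
    (MeasurableEquiv.sumPiEquivProdPi fun _ => ℝ).symm

theorem measurePreserving_pairFlatten (n s l : ℕ) :
    MeasurePreserving (pairFlatten n s l) ((stdGaussian n s).prod (stdGaussian n l))
      (Measure.pi fun _ => gaussianReal 0 1) := by
  have hs := measurePreserving_curry_symm (ι := Fin n) (κ := Fin s) fun _ _ => gaussianReal 0 1
  have hl := measurePreserving_curry_symm (ι := Fin n) (κ := Fin l) fun _ _ => gaussianReal 0 1
  have hsl := hs.prod hl
  exact (measurePreserving_sumPiEquivProdPi_symm _).comp hsl

def genericFst (n s l : ℕ) : Matrix (Fin n) (Fin s) (MvPolynomial (PairIndex n s l) ℝ) :=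
  Matrix.of fun i j => .X (.inl (i, j))

def genericSnd (n s l : ℕ) : Matrix (Fin n) (Fin l) (MvPolynomial (PairIndex n s l) ℝ) :=
  Matrix.of fun i j => .X (.inr (i, j))

theorem map_genericFst {n s l : ℕ} (x : Matrix (Fin n) (Fin s) ℝ × Matrix (Fin n) (Fin l) ℝ) :
    (genericFst n s l).map (MvPolynomial.aeval (pairFlatten n s l x)) = x.1 := by
  ext i j
  simp [genericFst]
  rfl

theorem map_genericSnd {n s l : ℕ} (x : Matrix (Fin n) (Fin s) ℝ × Matrix (Fin n) (Fin l) ℝ) :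
    (genericSnd n s l).map (MvPolynomial.aeval (pairFlatten n s l x)) = x.2 := by
  ext i j
  simp [genericSnd]
  rfl

theorem stdGaussian_prod_null_of_polynomial {n s l : ℕ}
    {g : Matrix (Fin n) (Fin s) ℝ × Matrix (Fin n) (Fin l) ℝ → ℝ}
    (p : MvPolynomial (PairIndex n s l) ℝ)
    (hp : ∀ x, MvPolynomial.aeval (pairFlatten n s l x) p = g x)
    {x₀ : Matrix (Fin n) (Fin s) ℝ × Matrix (Fin n) (Fin l) ℝ} (hx₀ : g x₀ ≠ 0) :
    (stdGaussian n s).prod (stdGaussian n l) {x | g x = 0} = 0 := by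
  have := nullSingletonClass_gaussianReal (μ := 0) one_ne_zero
  have hp0 : p ≠ 0 := by rintro rfl; simp [← hp x₀] at hx₀
  have hset : (pairFlatten n s l).symm ⁻¹' {x | g x = 0} = {y | MvPolynomial.eval y p = 0} := by
    ext y
    simp [← hp]
  rw [← (measurePreserving_pairFlatten n s l).symm.measure_preimage_equiv, hset]
  exact MvPolynomial.measure_pi_setOf_eval_eq_zero _ hp0

namespace SVDPartition

variable {m n ϱ : ℕ} {A : Matrix (Fin m) (Fin n) ℝ} (P : SVDPartition m n ϱ A)

theorem V1_transpose_mul_V1 : P.V1ᵀ * P.V1 = 1 := by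
  rw [show P.V1 = P.V.submatrix id (Fin.castLE P.hϱn.le) from rfl, Matrix.transpose_submatrix,
    ← Matrix.submatrix_mul _ _ _ _ _ Function.bijective_id, P.hV]
  exact Matrix.submatrix_one _ (Fin.castLE_injective P.hϱn.le)

theorem V2_transpose_mul_V1 : P.V2ᵀ * P.V1 = 0 := by
  ext i j
  have h := congrFun (congrFun P.hV ⟨ϱ + i, by omega⟩) (Fin.castLE P.hϱn.le j)
  rw [Matrix.one_apply_ne (by simp [Fin.ext_iff]; omega)] at h
  simpa [Matrix.mul_apply, SVDPartition.V1, SVDPartition.V2] using h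

variable {R R' : Type*} [CommRing R] [Algebra ℝ R] [CommRing R'] [Algebra ℝ R'] {k s l : ℕ}

/-! The following quantities are defined for matrices over an arbitrary `ℝ`-algebra so that
evaluating them at `genericFst`, `genericSnd` exhibits them as polynomials in the entries. -/

def proj1 (M : Matrix (Fin n) (Fin k) R) : Matrix (Fin ϱ) (Fin k) R :=
  P.V1ᵀ.map (algebraMap ℝ R) * M

def proj2 (M : Matrix (Fin n) (Fin k) R) : Matrix (Fin (n - ϱ)) (Fin k) R :=
  P.V2ᵀ.map (algebraMap ℝ R) * M

def gramDet (Ω : Matrix (Fin n) (Fin s) R) (Φ : Matrix (Fin n) (Fin l) R) : R :=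
  (P.proj1 Ω * (P.proj1 Ω)ᵀ).det * (P.proj1 Φ * (P.proj1 Φ)ᵀ).det

def clearedMatrix (Ω : Matrix (Fin n) (Fin s) R) (Φ : Matrix (Fin n) (Fin l) R) :
    Matrix (Fin ϱ) (Fin ϱ) R :=
  P.Sig1.map (algebraMap ℝ R) * P.proj1 Φ * (P.proj2 Φ)ᵀ * (P.Sig2 ^ 2).map (algebraMap ℝ R) *
    P.proj2 Ω * (P.proj1 Ω)ᵀ * (P.proj1 Ω * (P.proj1 Ω)ᵀ).adjugate *
    (P.Sig1⁻¹ ^ 2).map (algebraMap ℝ R) * (P.proj1 Φ * (P.proj1 Φ)ᵀ).adjugate *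
    P.Sig1⁻¹.map (algebraMap ℝ R)

def clearedDet (Ω : Matrix (Fin n) (Fin s) R) (Φ : Matrix (Fin n) (Fin l) R) : R :=
  (P.gramDet Ω Φ • (1 : Matrix (Fin ϱ) (Fin ϱ) R) + P.clearedMatrix Ω Φ).det

section Naturality

variable (f : R →ₐ[ℝ] R') (Ω : Matrix (Fin n) (Fin s) R) (Φ : Matrix (Fin n) (Fin l) R)

theorem map_proj1 (M : Matrix (Fin n) (Fin k) R) : (P.proj1 M).map f = P.proj1 (M.map f) := by
  rw [proj1, proj1, Matrix.map_mul, Matrix.map_map_algebraMap]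

theorem map_proj2 (M : Matrix (Fin n) (Fin k) R) : (P.proj2 M).map f = P.proj2 (M.map f) := by
  rw [proj2, proj2, Matrix.map_mul, Matrix.map_map_algebraMap]

theorem map_gramDet : f (P.gramDet Ω Φ) = P.gramDet (Ω.map f) (Φ.map f) := by
  simp only [gramDet, map_mul, AlgHom.map_det, AlgHom.mapMatrix_apply, Matrix.map_mul,
    Matrix.transpose_map, map_proj1]

theorem map_clearedMatrix :
    (P.clearedMatrix Ω Φ).map f = P.clearedMatrix (Ω.map f) (Φ.map f) := by
  have hadj (M : Matrix (Fin ϱ) (Fin ϱ) R) : M.adjugate.map f = (M.map f).adjugate :=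
    f.map_adjugate M
  simp only [clearedMatrix, Matrix.map_mul, Matrix.transpose_map, map_proj1, map_proj2,
    Matrix.map_map_algebraMap, hadj]

theorem map_clearedDet : f (P.clearedDet Ω Φ) = P.clearedDet (Ω.map f) (Φ.map f) := by
  have hsmul (c : R) : (c • (1 : Matrix (Fin ϱ) (Fin ϱ) R)).map f = f c • 1 := by
    ext i j
    by_cases h : i = j <;> simp [h]
  rw [clearedDet, clearedDet, AlgHom.map_det, map_add, AlgHom.mapMatrix_apply,
    AlgHom.mapMatrix_apply, hsmul, map_gramDet, map_clearedMatrix]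

end Naturality

theorem proj1_eq (M : Matrix (Fin n) (Fin k) ℝ) : P.proj1 M = P.V1ᵀ * M := by
  simp [proj1]

theorem proj2_eq (M : Matrix (Fin n) (Fin k) ℝ) : P.proj2 M = P.V2ᵀ * M := by
  simp [proj2]

def F1 (Ω : Matrix (Fin n) (Fin s) ℝ) (Φ : Matrix (Fin n) (Fin l) ℝ) : Matrix (Fin ϱ) (Fin ϱ) ℝ :=
  1 + P.Sig1 * (P.V1ᵀ * Φ) * (P.V2ᵀ * Φ)ᵀ * P.Sig2 ^ 2 * (P.V2ᵀ * Ω)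
    * pinvRow (P.V1ᵀ * Ω) * P.Sig1⁻¹ ^ 2 * ((P.V1ᵀ * Φ) * (P.V1ᵀ * Φ)ᵀ)⁻¹ * P.Sig1⁻¹

theorem gramDet_smul_F1 {Ω : Matrix (Fin n) (Fin s) ℝ} {Φ : Matrix (Fin n) (Fin l) ℝ}
    (h : P.gramDet Ω Φ ≠ 0) :
    P.gramDet Ω Φ • P.F1 Ω Φ = P.gramDet Ω Φ • 1 + P.clearedMatrix Ω Φ := by
  simp only [gramDet, clearedMatrix, proj1_eq, proj2_eq, Algebra.algebraMap_self, RingHom.coe_id,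
    Matrix.map_id] at h ⊢
  rw [F1, pinvRow, Matrix.inv_def (P.V1ᵀ * Ω * _), Matrix.inv_def (P.V1ᵀ * Φ * _),
    Ring.inverse_eq_inv', smul_add]
  set a := (P.V1ᵀ * Ω * (P.V1ᵀ * Ω)ᵀ).det
  set b := (P.V1ᵀ * Φ * (P.V1ᵀ * Φ)ᵀ).det
  have hab : a * b * (b⁻¹ * a⁻¹) = 1 := by
    obtain ⟨ha, hb⟩ := mul_ne_zero_iff.1 h
    field_simp
  simp only [Matrix.mul_smul, Matrix.smul_mul, smul_smul, hab, one_smul, Matrix.mul_assoc]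

theorem clearedDet_eq {Ω : Matrix (Fin n) (Fin s) ℝ} {Φ : Matrix (Fin n) (Fin l) ℝ}
    (h : P.gramDet Ω Φ ≠ 0) :
    P.clearedDet Ω Φ = P.gramDet Ω Φ ^ ϱ * (P.F1 Ω Φ).det := by
  rw [clearedDet, ← gramDet_smul_F1 P h, Matrix.det_smul, Fintype.card_fin]

def paddedV1 (hk : ϱ ≤ k) : Matrix (Fin n) (Fin k) ℝ :=
  P.V1 * (1 : Matrix (Fin k) (Fin k) ℝ).submatrix (Fin.castLE hk) id

theorem V1_transpose_mul_paddedV1 (hk : ϱ ≤ k) :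
    P.V1ᵀ * P.paddedV1 hk = (1 : Matrix (Fin k) (Fin k) ℝ).submatrix (Fin.castLE hk) id := by
  rw [paddedV1, ← Matrix.mul_assoc, V1_transpose_mul_V1, Matrix.one_mul]

theorem V2_transpose_mul_paddedV1 (hk : ϱ ≤ k) : P.V2ᵀ * P.paddedV1 hk = 0 := by
  rw [paddedV1, ← Matrix.mul_assoc, V2_transpose_mul_V1, Matrix.zero_mul]

theorem gramDet_paddedV1 (hs : ϱ ≤ s) (hl : ϱ ≤ l) :
    P.gramDet (P.paddedV1 hs) (P.paddedV1 hl) = 1 := by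
  simp only [gramDet, proj1_eq, V1_transpose_mul_paddedV1, Matrix.transpose_submatrix,
    Matrix.transpose_one, ← Matrix.submatrix_mul _ _ _ _ _ Function.bijective_id,
    Matrix.submatrix_one _ (Fin.castLE_injective _), Matrix.det_one, mul_one]

theorem clearedDet_paddedV1 (hs : ϱ ≤ s) (hl : ϱ ≤ l) :
    P.clearedDet (P.paddedV1 hs) (P.paddedV1 hl) = 1 := by
  simp [clearedDet, clearedMatrix, gramDet_paddedV1, proj2_eq, V2_transpose_mul_paddedV1]

theorem stdGaussian_prod_gramDet_eq_zero (hs : ϱ ≤ s) (hl : ϱ ≤ l) :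
    (stdGaussian n s).prod (stdGaussian n l) {x | P.gramDet x.1 x.2 = 0} = 0 :=
  stdGaussian_prod_null_of_polynomial (P.gramDet (genericFst n s l) (genericSnd n s l))
    (fun x => by rw [map_gramDet, map_genericFst, map_genericSnd])
    (x₀ := (P.paddedV1 hs, P.paddedV1 hl)) (by simp [gramDet_paddedV1])

theorem stdGaussian_prod_clearedDet_eq_zero (hs : ϱ ≤ s) (hl : ϱ ≤ l) :
    (stdGaussian n s).prod (stdGaussian n l) {x | P.clearedDet x.1 x.2 = 0} = 0 :=
  stdGaussian_prod_null_of_polynomial (P.clearedDet (genericFst n s l) (genericSnd n s l))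
    (fun x => by rw [map_clearedDet, map_genericFst, map_genericSnd])
    (x₀ := (P.paddedV1 hs, P.paddedV1 hl)) (by simp [clearedDet_paddedV1])

end SVDPartition

theorem statement6_general {m n ϱ s l : ℕ} (hϱs : ϱ < s) (hsl : s < l)
    (A : Matrix (Fin m) (Fin n) ℝ) (P : SVDPartition m n ϱ A) :
    ((stdGaussian n s).prod (stdGaussian n l))
        {x : Matrix (Fin n) (Fin s) ℝ × Matrix (Fin n) (Fin l) ℝ |
          IsUnit (1 + P.Sig1 * (P.V1ᵀ * x.2) * (P.V2ᵀ * x.2)ᵀ * P.Sig2 ^ 2 * (P.V2ᵀ * x.1)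
              * pinvRow (P.V1ᵀ * x.1) * P.Sig1⁻¹ ^ 2 * ((P.V1ᵀ * x.2) * (P.V1ᵀ * x.2)ᵀ)⁻¹
              * P.Sig1⁻¹).det}
      = 1 := by
  have hs : ϱ ≤ s := hϱs.le
  have hl : ϱ ≤ l := (hϱs.trans hsl).le
  refine (measure_congr (ae_eq_univ.2 ?_)).trans measure_univ
  refine measure_mono_null (fun x hx => ?_) (measure_union_null
    (P.stdGaussian_prod_gramDet_eq_zero hs hl) (P.stdGaussian_prod_clearedDet_eq_zero hs hl))
  change ¬IsUnit (P.F1 x.1 x.2).det at hx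
  by_cases h : P.gramDet x.1 x.2 = 0
  · exact Or.inl h
  · have hF : (P.F1 x.1 x.2).det = 0 := by simpa [isUnit_iff_ne_zero] using hx
    exact Or.inr <| show P.clearedDet x.1 x.2 = 0 by rw [P.clearedDet_eq h, hF, mul_zero]

/-- Proposition 5.7 of the paper: almost sure invertibility of
`F₁ = I + Σ₁ Φ₁ Φ₂ᵀ Σ₂² Ω₂ Ω₁† Σ₁⁻² (Φ₁ Φ₁ᵀ)⁻¹ Σ₁⁻¹`. -/
theorem statement6 {m n ϱ s l : ℕ} (hmn : n ≤ m) (hϱs : ϱ < s) (hsl : s < l)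
    (A : Matrix (Fin m) (Fin n) ℝ) (P : SVDPartition m n ϱ A)
    (hSig1 : IsUnit P.Sig1.det) :
    ((stdGaussian n s).prod (stdGaussian n l))
        {x : Matrix (Fin n) (Fin s) ℝ × Matrix (Fin n) (Fin l) ℝ |
          IsUnit (1 + P.Sig1 * (P.V1ᵀ * x.2) * (P.V2ᵀ * x.2)ᵀ * P.Sig2 ^ 2 * (P.V2ᵀ * x.1)
              * pinvRow (P.V1ᵀ * x.1) * P.Sig1⁻¹ ^ 2 * ((P.V1ᵀ * x.2) * (P.V1ᵀ * x.2)ᵀ)⁻¹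
              * P.Sig1⁻¹).det}
      = 1 :=
  statement6_general hϱs hsl A P

end RSVD
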